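/- arXiv:2211.15394 — 4 statements merged into one kernel-verified Lean document; each statement's English description precedes it below -/
import Mathlib

section
/- Let k ∈ ℕ, let f : ℝ → ℂ be a 2π-periodic C^k function, let z₁, …, z_M ∈ ℝ be finitely many points, and let ε > 0. Then there exists a finite Fourier series p such that p^{(i)}(z_j) = f^{(i)}(z_j) for all 0 ≤ i ≤ k and all j = 1, …, M, and |f − p|_k < ε. -/
/-!
Finite Fourier series are dense in the `2π`-periodic `C^k` functions. For `k = 0` this is the
density of the span of the characters in `C(AddCircle (2π), ℂ)`. For the inductive step one
approximates `f'` by `P`, subtracts from `P` its mean (small, since `f'` has mean zero) and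
integrates; the mean value theorem over one period then controls `f` itself.

For the interpolation, reduce the nodes modulo `2π` to points `x` with distinct `e^{ix}`. For each
node `x₀` the functions `(e^{it} - e^{ix₀})^j ∏_{y ≠ x₀} (e^{it} - e^{iy})^{k+1}`, `j ≤ k`, have
`k`-jets vanishing at the other nodes and forming a triangular system with nonzero diagonal at
`x₀`, so suitable combinations realise every unit `k`-jet at the nodes. Adding to a good
approximation `P` the combination of these with the jets of `f - P` as coefficients fixes the jets
at the nodes while spoiling the approximation by at most a constant times the error of `P`.
-/

/-- A finite Fourier series: a function of the form
`t ↦ ∑_{m=-N}^{N} c m * exp (i m t)` with complex coefficients. -/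
def IsFiniteFourierSeries (p : ℝ → ℂ) : Prop :=
  ∃ (N : ℕ) (c : ℤ → ℂ), ∀ t : ℝ,
    p t = ∑ m ∈ Finset.Icc (-(N : ℤ)) (N : ℤ), c m * Complex.exp (m * t * Complex.I)

open Complex Set Function
open scoped ContDiff

noncomputable def fourierExp (m : ℤ) (t : ℝ) : ℂ := exp (m * t * I)

lemma fourierExp_zero : fourierExp 0 = 1 := by
  ext t; simp [fourierExp]

lemma fourierExp_add (a b : ℤ) : fourierExp (a + b) = fourierExp a * fourierExp b := by
  ext t
  simp only [fourierExp, Pi.mul_apply, ← exp_add]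
  congr 1
  push_cast
  ring

lemma hasDerivAt_fourierExp (m : ℤ) (t : ℝ) :
    HasDerivAt (fourierExp m) (m * I * fourierExp m t) t := by
  have := ((hasDerivAt_id (t : ℂ)).comp_ofReal.const_mul (m : ℂ)).mul_const I |>.cexp
  exact this.congr_deriv (by rw [fourierExp, id, mul_one]; ring)

lemma contDiff_fourierExp (m : ℤ) : ContDiff ℝ ∞ (fourierExp m) :=
  contDiff_exp.comp ((contDiff_const.mul ofRealCLM.contDiff).mul contDiff_const)

lemma periodic_fourierExp (m : ℤ) : Periodic (fourierExp m) (2 * Real.pi) := by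
  intro t
  simp only [fourierExp]
  rw [show (m : ℂ) * ↑(t + 2 * Real.pi) * I = m * t * I + m * (2 * Real.pi * I) by
    push_cast; ring, exp_add, exp_int_mul_two_pi_mul_I, mul_one]

lemma fourier_coe_eq_fourierExp (m : ℤ) (t : ℝ) :
    fourier m (t : AddCircle (2 * Real.pi)) = fourierExp m t := by
  rw [fourier_coe_apply, fourierExp]
  congr 1
  push_cast
  field_simp

def trigPoly : Subalgebra ℂ (ℝ → ℂ) :=
  (Submodule.span ℂ (range fourierExp)).toSubalgebra
    (fourierExp_zero ▸ Submodule.subset_span (mem_range_self 0))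
    (fun p q hp hq => by
      have := Submodule.mul_mem_mul hp hq
      rw [Submodule.span_mul_span] at this
      refine Submodule.span_mono ?_ this
      rintro _ ⟨_, ⟨a, rfl⟩, _, ⟨b, rfl⟩, rfl⟩
      exact ⟨a + b, fourierExp_add a b⟩)

lemma mem_trigPoly_iff {p : ℝ → ℂ} : p ∈ trigPoly ↔ p ∈ Submodule.span ℂ (range fourierExp) :=
  Iff.rfl

lemma fourierExp_mem_trigPoly (m : ℤ) : fourierExp m ∈ trigPoly :=
  Submodule.subset_span (mem_range_self m)

lemma const_mem_trigPoly (c : ℂ) : (fun _ => c) ∈ trigPoly :=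
  trigPoly.algebraMap_mem c

section

variable {p : ℝ → ℂ}

lemma contDiff_of_mem_trigPoly (hp : p ∈ trigPoly) : ContDiff ℝ ∞ p := by
  rw [mem_trigPoly_iff] at hp
  induction hp using Submodule.span_induction with
  | mem _ h => obtain ⟨m, rfl⟩ := h; exact contDiff_fourierExp m
  | zero => exact contDiff_const
  | add _ _ _ _ hp hq => exact hp.add hq
  | smul a _ _ hp => exact hp.const_smul a

lemma contDiffAt_of_mem_trigPoly (hp : p ∈ trigPoly) (n : ℕ) (x : ℝ) : ContDiffAt ℝ n p x :=
  (contDiff_of_mem_trigPoly hp).contDiffAt.of_le (by exact_mod_cast le_top)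

lemma periodic_of_mem_trigPoly (hp : p ∈ trigPoly) : Periodic p (2 * Real.pi) := by
  rw [mem_trigPoly_iff] at hp
  induction hp using Submodule.span_induction with
  | mem _ h => obtain ⟨m, rfl⟩ := h; exact periodic_fourierExp m
  | zero => exact fun _ => rfl
  | add _ _ _ _ hp hq => exact hp.add hq
  | smul a _ _ hp => exact hp.smul a

lemma exists_hasDerivAt_of_mem_trigPoly (hp : p ∈ trigPoly) :
    ∃ p' ∈ trigPoly, ∀ x, HasDerivAt p (p' x) x := by
  rw [mem_trigPoly_iff] at hp
  induction hp using Submodule.span_induction with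
  | mem _ h =>
    obtain ⟨m, rfl⟩ := h
    exact ⟨(m * I) • fourierExp m, trigPoly.smul_mem (fourierExp_mem_trigPoly m) _,
      hasDerivAt_fourierExp m⟩
  | zero => exact ⟨0, trigPoly.zero_mem, fun _ => hasDerivAt_const _ _⟩
  | add _ _ _ _ hp hq =>
    obtain ⟨p', hp', hp⟩ := hp
    obtain ⟨q', hq', hq⟩ := hq
    exact ⟨p' + q', trigPoly.add_mem hp' hq', fun x => (hp x).add (hq x)⟩
  | smul a _ _ hp =>
    obtain ⟨p', hp', hp⟩ := hp
    exact ⟨a • p', trigPoly.smul_mem hp' a, fun x => (hp x).const_smul a⟩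

lemma iteratedDeriv_mem_trigPoly (hp : p ∈ trigPoly) (n : ℕ) :
    iteratedDeriv n p ∈ trigPoly := by
  induction n with
  | zero => exact hp
  | succ n ih =>
    obtain ⟨p', hp', hderiv⟩ := exists_hasDerivAt_of_mem_trigPoly ih
    rwa [iteratedDeriv_succ, funext fun x => (hderiv x).deriv]

lemma exists_hasDerivAt_eq_sub_const_of_mem_trigPoly (hp : p ∈ trigPoly) :
    ∃ Q ∈ trigPoly, ∃ a : ℂ, ∀ x, HasDerivAt Q (p x - a) x := by
  rw [mem_trigPoly_iff] at hp
  induction hp using Submodule.span_induction with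
  | mem _ h =>
    obtain ⟨m, rfl⟩ := h
    rcases eq_or_ne m 0 with rfl | hm
    · exact ⟨0, trigPoly.zero_mem, 1, fun x => by simp [fourierExp_zero]⟩
    · have hmI : (m * I : ℂ) ≠ 0 := mul_ne_zero (Int.cast_ne_zero.mpr hm) I_ne_zero
      refine ⟨(m * I)⁻¹ • fourierExp m, trigPoly.smul_mem (fourierExp_mem_trigPoly m) _, 0,
        fun x => ?_⟩
      simpa only [sub_zero, smul_eq_mul, ← mul_assoc, inv_mul_cancel₀ hmI, one_mul] using
        (hasDerivAt_fourierExp m x).const_smul (m * I)⁻¹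
  | zero => exact ⟨0, trigPoly.zero_mem, 0, fun _ => by simp⟩
  | add _ _ _ _ hp hq =>
    obtain ⟨P, hP, a, hp⟩ := hp
    obtain ⟨Q, hQ, b, hq⟩ := hq
    exact ⟨P + Q, trigPoly.add_mem hP hQ, a + b, fun x => by
      simpa [add_sub_add_comm] using (hp x).add (hq x)⟩
  | smul c _ _ hp =>
    obtain ⟨P, hP, a, hp⟩ := hp
    exact ⟨c • P, trigPoly.smul_mem hP c, c * a, fun x => by
      simpa [mul_sub] using (hp x).const_smul c⟩

lemma exists_norm_iteratedDeriv_le_of_mem_trigPoly (hp : p ∈ trigPoly) (k : ℕ) :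
    ∃ B, ∀ i ≤ k, ∀ x, ‖iteratedDeriv i p x‖ ≤ B := by
  let jet : ℝ → Fin (k + 1) → ℂ := fun x i => iteratedDeriv i p x
  have hjet : Periodic jet (2 * Real.pi) := fun x =>
    funext fun i => periodic_of_mem_trigPoly (iteratedDeriv_mem_trigPoly hp i) x
  have hcont : Continuous jet := continuous_pi fun i =>
    (contDiff_of_mem_trigPoly (iteratedDeriv_mem_trigPoly hp i)).continuous
  obtain ⟨B, hB⟩ := isBounded_iff_forall_norm_le.mp
    (hjet.isBounded_of_continuous Real.two_pi_pos.ne' hcont)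
  exact ⟨B, fun i hi x =>
    (norm_le_pi_norm (jet x) ⟨i, Nat.lt_succ_of_le hi⟩).trans (hB _ (mem_range_self x))⟩

lemma isFiniteFourierSeries_of_mem_trigPoly (hp : p ∈ trigPoly) : IsFiniteFourierSeries p := by
  obtain ⟨c, rfl⟩ := Finsupp.mem_span_range_iff_exists_finsupp.mp (mem_trigPoly_iff.mp hp)
  refine ⟨c.support.sup Int.natAbs, c, fun t => ?_⟩
  rw [Finsupp.sum, Finset.sum_apply]
  refine Finset.sum_subset (fun m hm => ?_) fun m _ hm => by
    simp [Finsupp.notMem_support_iff.mp hm]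
  have := Finset.le_sup (f := Int.natAbs) hm
  rw [Finset.mem_Icc]
  omega

end

lemma Function.Periodic.iteratedDeriv {𝕜 F : Type*} [NontriviallyNormedField 𝕜]
    [NormedAddCommGroup F] [NormedSpace 𝕜 F] {f : 𝕜 → F} {c : 𝕜} (h : Periodic f c) (n : ℕ) :
    Periodic (iteratedDeriv n f) c := fun x => by
  have := congrFun (iteratedDeriv_comp_add_const n f c) x
  rwa [funext h, eq_comm] at this

section MeanValue

variable {E : Type*} [NormedAddCommGroup E] [NormedSpace ℝ E] {g g' : ℝ → E} {c C : ℝ}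

lemma Function.Periodic.norm_le_of_hasDerivAt {a : ℝ} (hg : Periodic g c) (hc : 0 < c)
    (hderiv : ∀ x, HasDerivAt g (g' x) x) (hbound : ∀ x, ‖g' x‖ ≤ C) (ha : g a = 0) (x : ℝ) :
    ‖g x‖ ≤ C * c := by
  obtain ⟨y, ⟨hay, hya⟩, hxy⟩ := hg.exists_mem_Ico hc x a
  have hC : 0 ≤ C := (norm_nonneg _).trans (hbound 0)
  have hmv := convex_univ.norm_image_sub_le_of_norm_hasDerivWithin_le
    (fun x _ => (hderiv x).hasDerivWithinAt) (fun x _ => hbound x) (mem_univ a) (mem_univ y)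
  rw [hxy, ← sub_zero (g y), ← ha]
  refine hmv.trans (mul_le_mul_of_nonneg_left ?_ hC)
  rw [Real.norm_of_nonneg (sub_nonneg.mpr hay)]
  linarith

/-- `a` is the mean of `P - g'` over a period, because `f` and `Q` are periodic. -/
lemma norm_le_of_hasDerivAt_sub_const {f Q P : ℝ → E} {a : E} {δ : ℝ} (hc : 0 < c)
    (hf : Periodic f c) (hQ : Periodic Q c) (hf' : ∀ x, HasDerivAt f (g' x) x)
    (hQ' : ∀ x, HasDerivAt Q (P x - a) x) (hclose : ∀ x, ‖g' x - P x‖ ≤ δ) : ‖a‖ ≤ δ := by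
  have hderiv : ∀ x, HasDerivAt (fun x => f x - Q x - x • a) (g' x - P x) x := fun x => by
    convert ((hf' x).fun_sub (hQ' x)).fun_sub ((hasDerivAt_id' x).smul_const a) using 1
    rw [one_smul]
    abel
  have hmv := convex_univ.norm_image_sub_le_of_norm_hasDerivWithin_le
    (fun x _ => (hderiv x).hasDerivWithinAt) (fun x _ => hclose x) (mem_univ 0) (mem_univ c)
  have hperiod : f c - Q c - c • a - (f 0 - Q 0 - (0 : ℝ) • a) = -(c • a) := by
    rw [← zero_add c, hf 0, hQ 0]; simp
  rw [hperiod, norm_neg, norm_smul, sub_zero, Real.norm_of_nonneg hc.le, mul_comm] at hmv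
  exact le_of_mul_le_mul_right hmv hc

end MeanValue

lemma comp_coe_mem_trigPoly [Fact (0 < 2 * Real.pi)] {g : C(AddCircle (2 * Real.pi), ℂ)}
    (hg : g ∈ Submodule.span ℂ (range fourier)) : (fun x : ℝ => g x) ∈ trigPoly := by
  induction hg using Submodule.span_induction with
  | mem _ h =>
    obtain ⟨m, rfl⟩ := h
    simpa only [fourier_coe_eq_fourierExp] using fourierExp_mem_trigPoly m
  | zero => exact trigPoly.zero_mem
  | add _ _ _ _ hp hq => exact trigPoly.add_mem hp hq
  | smul a _ _ hp => exact trigPoly.smul_mem hp a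

lemma exists_mem_trigPoly_norm_sub_le {f : ℝ → ℂ} (hf : Continuous f)
    (hper : Periodic f (2 * Real.pi)) {δ : ℝ} (hδ : 0 < δ) :
    ∃ P ∈ trigPoly, ∀ x, ‖f x - P x‖ ≤ δ := by
  have : Fact (0 < 2 * Real.pi) := ⟨Real.two_pi_pos⟩
  let F : C(AddCircle (2 * Real.pi), ℂ) := ⟨hper.lift, hf.quotient_liftOn' _⟩
  have hF : F ∈ (Submodule.span ℂ (range (fourier (T := 2 * Real.pi)))).topologicalClosure := by
    rw [span_fourier_closure_eq_top]
    trivial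
  rw [← SetLike.mem_coe, Submodule.topologicalClosure_coe] at hF
  obtain ⟨g, hg, hdist⟩ := Metric.mem_closure_iff.mp hF δ hδ
  refine ⟨fun x => g x, comp_coe_mem_trigPoly hg, fun x => ?_⟩
  rw [← hper.lift_coe x, ← dist_eq_norm]
  exact (ContinuousMap.dist_apply_le_dist _).trans hdist.le

lemma exists_mem_trigPoly_iteratedDeriv_sub_le_of_deriv {k : ℕ} {f P : ℝ → ℂ} {δ : ℝ}
    (hf : Differentiable ℝ f) (hper : Periodic f (2 * Real.pi)) (hP : P ∈ trigPoly)
    (hfP : ∀ i ≤ k, ∀ x, ‖iteratedDeriv i (deriv f) x - iteratedDeriv i P x‖ ≤ δ) :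
    ∃ p ∈ trigPoly, ∀ i ≤ k + 1, ∀ x,
      ‖iteratedDeriv i f x - iteratedDeriv i p x‖ ≤ 4 * Real.pi * δ := by
  obtain ⟨Q, hQ, a, hQ'⟩ := exists_hasDerivAt_eq_sub_const_of_mem_trigPoly hP
  have ha : ‖a‖ ≤ δ := norm_le_of_hasDerivAt_sub_const Real.two_pi_pos hper
    (periodic_of_mem_trigPoly hQ) (fun x => (hf x).hasDerivAt) hQ'
    (fun x => by simpa using hfP 0 (Nat.zero_le k) x)
  let p := Q + fun _ => f 0 - Q 0
  have hp : p ∈ trigPoly := trigPoly.add_mem hQ (const_mem_trigPoly _)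
  have hp' : deriv p = P - fun _ => a := funext fun x => ((hQ' x).add_const _).deriv
  have hderiv : ∀ i ≤ k, ∀ x,
      ‖iteratedDeriv i (deriv f) x - iteratedDeriv i (deriv p) x‖ ≤ 2 * δ := by
    intro i hi x
    rw [hp', iteratedDeriv_sub (contDiffAt_of_mem_trigPoly hP i x) contDiffAt_const,
      iteratedDeriv_const, sub_sub_eq_add_sub, add_sub_right_comm, two_mul]
    refine (norm_add_le _ _).trans (add_le_add (hfP i hi x) ?_)
    split_ifs <;> simp [ha, (norm_nonneg a).trans ha]
  have hδ : 0 ≤ δ := (norm_nonneg _).trans (hfP 0 (Nat.zero_le k) 0)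
  refine ⟨p, hp, fun i hi x => ?_⟩
  rcases i with _ | i
  · have hperiod : Periodic (f - p) (2 * Real.pi) := hper.sub (periodic_of_mem_trigPoly hp)
    have hp_diff := (contDiff_of_mem_trigPoly hp).differentiable (by simp)
    have hbound := hperiod.norm_le_of_hasDerivAt Real.two_pi_pos
      (fun x => (hf x).hasDerivAt.sub (hp_diff x).hasDerivAt)
      (fun x => by simpa using hderiv 0 (Nat.zero_le k) x) (a := 0) (by simp [p]) x
    rw [iteratedDeriv_zero, iteratedDeriv_zero]
    exact hbound.trans_eq (by ring)
  · rw [iteratedDeriv_succ', iteratedDeriv_succ']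
    nlinarith [hderiv i (by omega) x, Real.pi_gt_three]

theorem exists_mem_trigPoly_iteratedDeriv_sub_le (k : ℕ) {f : ℝ → ℂ} (hf : ContDiff ℝ k f)
    (hper : Periodic f (2 * Real.pi)) {δ : ℝ} (hδ : 0 < δ) :
    ∃ P ∈ trigPoly, ∀ i ≤ k, ∀ x, ‖iteratedDeriv i f x - iteratedDeriv i P x‖ ≤ δ := by
  induction k generalizing f δ with
  | zero =>
    obtain ⟨P, hP, hfP⟩ := exists_mem_trigPoly_norm_sub_le hf.continuous hper hδ
    exact ⟨P, hP, fun i hi x => by simpa [Nat.le_zero.mp hi] using hfP x⟩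
  | succ k ih =>
    obtain ⟨hdiff, -, hf'⟩ := (contDiff_succ_iff_deriv (n := k)).mp (by exact_mod_cast hf)
    have hper' : Periodic (deriv f) (2 * Real.pi) := by simpa using hper.iteratedDeriv 1
    obtain ⟨P, hP, hfP⟩ := ih hf' hper' (div_pos hδ (by positivity : 0 < 4 * Real.pi))
    obtain ⟨p, hp, hfp⟩ := exists_mem_trigPoly_iteratedDeriv_sub_le_of_deriv hdiff hper hP hfP
    refine ⟨p, hp, fun i hi x => (hfp i hi x).trans_eq ?_⟩
    field_simp

section Vanishing

variable {𝕜 𝔸 : Type*} [NontriviallyNormedField 𝕜] [NormedCommRing 𝔸] [NormedAlgebra 𝕜 𝔸]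
  {g h : 𝕜 → 𝔸} {z : 𝕜}

lemma contDiff_pow_succ_mul_cofactor (hg : ContDiff 𝕜 ∞ g) (hh : ContDiff 𝕜 ∞ h) (s : ℕ) :
    ContDiff 𝕜 ∞ ((s + 1 : 𝔸) • deriv g * h + g * deriv h) :=
  ((contDiff_infty_iff_deriv.mp hg).2.const_smul (s + 1 : 𝔸) |>.mul hh).add
    (hg.mul (contDiff_infty_iff_deriv.mp hh).2)

lemma deriv_pow_succ_mul (hg : Differentiable 𝕜 g) (hh : Differentiable 𝕜 h) (s : ℕ) :
    deriv (g ^ (s + 1) * h) = g ^ s * ((s + 1 : 𝔸) • deriv g * h + g * deriv h) := by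
  ext x
  have := ((hg x).hasDerivAt.pow (s + 1)).mul (hh x).hasDerivAt
  rw [this.deriv]
  simp only [Nat.cast_add, Nat.cast_one, add_tsub_cancel_right, Pi.pow_apply, Pi.mul_apply,
    Pi.add_apply, Pi.smul_apply, smul_eq_mul]
  ring

lemma iteratedDeriv_pow_mul_of_lt (hg : ContDiff 𝕜 ∞ g) (hh : ContDiff 𝕜 ∞ h) (hz : g z = 0)
    {i s : ℕ} (hi : i < s) : iteratedDeriv i (g ^ s * h) z = 0 := by
  induction s generalizing h i with
  | zero => omega
  | succ s ih =>
    rcases i with _ | i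
    · simp [hz]
    · rw [iteratedDeriv_succ', deriv_pow_succ_mul (hg.differentiable (by simp))
        (hh.differentiable (by simp))]
      exact ih (contDiff_pow_succ_mul_cofactor hg hh s) (by omega)

lemma iteratedDeriv_pow_mul_self (hg : ContDiff 𝕜 ∞ g) (hh : ContDiff 𝕜 ∞ h) (hz : g z = 0)
    (s : ℕ) : iteratedDeriv s (g ^ s * h) z = s.factorial * deriv g z ^ s * h z := by
  induction s generalizing h with
  | zero => simp
  | succ s ih =>
    rw [iteratedDeriv_succ', deriv_pow_succ_mul (hg.differentiable (by simp))
        (hh.differentiable (by simp)), ih (contDiff_pow_succ_mul_cofactor hg hh s)]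
    simp only [Algebra.smul_mul_assoc, Pi.add_apply, Pi.smul_apply, Pi.mul_apply, smul_eq_mul, hz,
      zero_mul, add_zero, Nat.factorial_succ, Nat.cast_mul, Nat.cast_add, Nat.cast_one]
    ring

end Vanishing

lemma exists_iteratedDeriv_sum_smul_eq_ite {𝕜 K : Type*} [NontriviallyNormedField 𝕜]
    [NormedField K] [NormedAlgebra 𝕜 K] {g : ℕ → 𝕜 → K} {x₀ : 𝕜} {k : ℕ}
    (hg : ∀ j, ContDiffAt 𝕜 k (g j) x₀) (htri : ∀ j i, i < j → iteratedDeriv i (g j) x₀ = 0)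
    (hdiag : ∀ j, iteratedDeriv j (g j) x₀ ≠ 0) {i₀ : ℕ} (hi₀ : i₀ ≤ k) :
    ∃ α : Fin (k + 1) → K, ∀ i ≤ k,
      iteratedDeriv i (∑ j : Fin (k + 1), α j • g j) x₀ = if i = i₀ then 1 else 0 := by
  let A : Matrix (Fin (k + 1)) (Fin (k + 1)) K := fun j i => iteratedDeriv i (g j) x₀
  have hA : IsUnit A := by
    rw [Matrix.isUnit_iff_isUnit_det,
      Matrix.det_of_isUpperTriangular (M := A) fun j i hij => htri j i hij]
    exact (Finset.prod_ne_zero_iff.mpr fun j _ => hdiag j : ∏ j, A j j ≠ 0).isUnit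
  obtain ⟨α, hα⟩ := Matrix.vecMul_surjective_iff_isUnit.mpr hA (Pi.single ⟨i₀, by omega⟩ 1)
  refine ⟨α, fun i hi => ?_⟩
  rw [iteratedDeriv_sum (f := fun j => α j • g j) fun j _ =>
    ((hg j).of_le (Nat.cast_le.mpr hi)).const_smul (α j)]
  have := congrFun hα ⟨i, by omega⟩
  simpa [Matrix.vecMul, dotProduct, A, Pi.single_apply, Fin.ext_iff] using this

lemma exists_mem_trigPoly_iteratedDeriv_eq_ite (k : ℕ) {s : Finset ℝ}
    (hs : InjOn (fun t : ℝ => exp (t * I)) s) {x₀ : ℝ} (hx₀ : x₀ ∈ s) {i₀ : ℕ} (hi₀ : i₀ ≤ k) :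
    ∃ q ∈ trigPoly, ∀ x ∈ s, ∀ i ≤ k,
      iteratedDeriv i q x = if x = x₀ ∧ i = i₀ then 1 else 0 := by
  classical
  let φ : ℝ → ℝ → ℂ := fun y t => fourierExp 1 t - fourierExp 1 y
  have hφ_mem (y : ℝ) : φ y ∈ trigPoly :=
    trigPoly.sub_mem (fourierExp_mem_trigPoly 1) (const_mem_trigPoly _)
  have hφ_deriv (y : ℝ) : deriv (φ y) y = I * fourierExp 1 y :=
    ((hasDerivAt_fourierExp 1 y).sub_const (fourierExp 1 y)).deriv.trans (by simp)
  have hφ_ne {y : ℝ} (hy : y ∈ s) (hyx₀ : y ≠ x₀) : φ y x₀ ≠ 0 := by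
    refine sub_ne_zero.mpr fun h => hyx₀ (hs hy hx₀ ?_)
    simpa [fourierExp] using h.symm
  let β := ∏ y ∈ s.erase x₀, φ y ^ (k + 1)
  have hβ_mem : β ∈ trigPoly := prod_mem fun y _ => pow_mem (hφ_mem y) _
  have hg_mem (j : ℕ) : φ x₀ ^ j * β ∈ trigPoly := mul_mem (pow_mem (hφ_mem x₀) j) hβ_mem
  obtain ⟨α, hα⟩ := exists_iteratedDeriv_sum_smul_eq_ite (g := fun j => φ x₀ ^ j * β) (k := k)
    (fun j => contDiffAt_of_mem_trigPoly (hg_mem j) k x₀)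
    (fun j i hij => iteratedDeriv_pow_mul_of_lt (contDiff_of_mem_trigPoly (hφ_mem x₀))
      (contDiff_of_mem_trigPoly hβ_mem) (sub_self _) hij)
    (fun j => by
      rw [iteratedDeriv_pow_mul_self (contDiff_of_mem_trigPoly (hφ_mem x₀))
        (contDiff_of_mem_trigPoly hβ_mem) (sub_self _), hφ_deriv,
        show β x₀ = ∏ y ∈ s.erase x₀, φ y x₀ ^ (k + 1) by simp [β]]
      refine mul_ne_zero (mul_ne_zero (Nat.cast_ne_zero.mpr j.factorial_ne_zero)
        (pow_ne_zero _ ?_)) ?_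
      · exact mul_ne_zero I_ne_zero (exp_ne_zero _)
      · exact Finset.prod_ne_zero_iff.mpr fun y hy =>
          pow_ne_zero _ (hφ_ne (Finset.mem_of_mem_erase hy) (Finset.ne_of_mem_erase hy)))
    hi₀
  refine ⟨∑ j, α j • (φ x₀ ^ (j : ℕ) * β), sum_mem fun j _ => trigPoly.smul_mem (hg_mem j) _,
    fun x hx i hi => ?_⟩
  by_cases hxx₀ : x = x₀
  · subst hxx₀
    simpa using hα i hi
  · let R := (∏ y ∈ (s.erase x₀).erase x, φ y ^ (k + 1)) * ∑ j, α j • φ x₀ ^ (j : ℕ)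
    have hR : R ∈ trigPoly := mul_mem (prod_mem fun y _ => pow_mem (hφ_mem y) _)
      (sum_mem fun j _ => trigPoly.smul_mem (pow_mem (hφ_mem x₀) _) _)
    have hfactor : ∑ j, α j • (φ x₀ ^ (j : ℕ) * β) = φ x ^ (k + 1) * R := by
      simp only [R, β]
      rw [← Finset.mul_prod_erase _ _ (Finset.mem_erase.mpr ⟨hxx₀, hx⟩), Finset.mul_sum,
        Finset.mul_sum]
      exact Finset.sum_congr rfl fun j _ => by
        rw [mul_smul_comm, mul_smul_comm, mul_left_comm, mul_comm (φ x₀ ^ _)]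
    rw [hfactor, iteratedDeriv_pow_mul_of_lt (contDiff_of_mem_trigPoly (hφ_mem x))
      (contDiff_of_mem_trigPoly hR) (sub_self _) (by omega), if_neg (fun h => hxx₀ h.1)]

theorem exists_mem_trigPoly_iteratedDeriv_eq_of_norm_le (k : ℕ) {s : Finset ℝ}
    (hs : InjOn (fun t : ℝ => exp (t * I)) s) :
    ∃ C, ∀ (v : ℝ → ℕ → ℂ) (δ : ℝ), (∀ x ∈ s, ∀ i ≤ k, ‖v x i‖ ≤ δ) →
      ∃ r ∈ trigPoly, (∀ x ∈ s, ∀ i ≤ k, iteratedDeriv i r x = v x i) ∧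
        ∀ i ≤ k, ∀ t, ‖iteratedDeriv i r t‖ ≤ C * δ := by
  classical
  let S := s ×ˢ Finset.range (k + 1)
  have hbasis : ∀ b ∈ S, ∃ q ∈ trigPoly, ∀ x ∈ s, ∀ i ≤ k,
      iteratedDeriv i q x = if x = b.1 ∧ i = b.2 then 1 else 0 := fun b hb => by
    rw [Finset.mem_product, Finset.mem_range] at hb
    exact exists_mem_trigPoly_iteratedDeriv_eq_ite k hs hb.1 (by omega)
  choose! q hq_mem hq using hbasis
  choose! B hB using fun b hb => exists_norm_iteratedDeriv_le_of_mem_trigPoly (hq_mem b hb) k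
  refine ⟨∑ b ∈ S, B b, fun v δ hv => ?_⟩
  let r := ∑ b ∈ S, v b.1 b.2 • q b
  have hr (i : ℕ) (t : ℝ) :
      iteratedDeriv i r t = ∑ b ∈ S, v b.1 b.2 * iteratedDeriv i (q b) t := by
    rw [iteratedDeriv_sum fun b hb =>
      contDiffAt_of_mem_trigPoly (trigPoly.smul_mem (hq_mem b hb) (v b.1 b.2)) i t]
    simp only [iteratedDeriv_const_smul_field, smul_eq_mul]
  refine ⟨r, sum_mem fun b hb => trigPoly.smul_mem (hq_mem b hb) _, fun x hx i hi => ?_,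
    fun i hi t => ?_⟩
  · have hxi : (x, i) ∈ S := Finset.mk_mem_product hx (Finset.mem_range.mpr (by omega))
    rw [hr, Finset.sum_eq_single_of_mem (x, i) hxi]
    · simp [hq _ hxi x hx i hi]
    · intro b hb hbxi
      rw [hq b hb x hx i hi, if_neg fun h => hbxi (Prod.ext h.1 h.2).symm, mul_zero]
  · rw [hr, Finset.sum_mul]
    refine (norm_sum_le _ _).trans (Finset.sum_le_sum fun b hb => ?_)
    obtain ⟨hb₁, hb₂⟩ := Finset.mem_product.mp hb
    have hvb := hv _ hb₁ _ (Nat.le_of_lt_succ (Finset.mem_range.mp hb₂))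
    rw [norm_mul, mul_comm (B b)]
    exact mul_le_mul hvb (hB b hb i hi t) (norm_nonneg _) ((norm_nonneg _).trans hvb)

lemma injOn_exp_mul_I_Ico (a : ℝ) :
    InjOn (fun t : ℝ => exp (t * I)) (Ico a (a + 2 * Real.pi)) := fun _ hx _ hy h =>
  Circle.exp_injOn_Ico (by simp) hx hy (Circle.ext h)

lemma Function.Periodic.apply_toIcoMod {α β : Type*} [AddCommGroup α] [LinearOrder α]
    [IsOrderedAddMonoid α] [Archimedean α] {f : α → β} {c : α} (h : Periodic f c) (hc : 0 < c)
    (a x : α) : f (toIcoMod hc a x) = f x :=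
  h.sub_zsmul_eq _

/-- Simultaneous interpolation and approximation by finite Fourier series: for a `2π`-periodic
`C^k` function `f : ℝ → ℂ`, finitely many points `z 1, …, z M` and `ε > 0`, there is a finite
Fourier series `p` whose derivatives up to order `k` agree with those of `f` at each `z j`, and
which is `ε`-close to `f` in the `C^k`-norm. -/
theorem fourier_interpolation_and_approximation
    (k : ℕ) (f : ℝ → ℂ) (hf : ContDiff ℝ k f)
    (hper : ∀ x : ℝ, f (x + 2 * Real.pi) = f x)
    (M : ℕ) (z : Fin M → ℝ) (ε : ℝ) (hε : 0 < ε) :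
    ∃ p : ℝ → ℂ, IsFiniteFourierSeries p ∧
      (∀ i ≤ k, ∀ j : Fin M, iteratedDeriv i p (z j) = iteratedDeriv i f (z j)) ∧
      (∀ i ≤ k, ∀ x : ℝ, ‖iteratedDeriv i f x - iteratedDeriv i p x‖ < ε) := by
  classical
  let s := Finset.univ.image fun j => toIcoMod Real.two_pi_pos 0 (z j)
  have hs : InjOn (fun t : ℝ => exp (t * I)) s := (injOn_exp_mul_I_Ico 0).mono fun x hx => by
    obtain ⟨j, -, rfl⟩ := Finset.mem_image.mp hx
    exact toIcoMod_mem_Ico _ _ _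
  obtain ⟨C, hC⟩ := exists_mem_trigPoly_iteratedDeriv_eq_of_norm_le k hs
  let δ := ε / (2 * (|C| + 1))
  have hδ : 0 < δ := by positivity
  obtain ⟨P, hP, hfP⟩ := exists_mem_trigPoly_iteratedDeriv_sub_le k hf hper hδ
  obtain ⟨r, hr, hr_jet, hr_le⟩ :=
    hC (fun x i => iteratedDeriv i f x - iteratedDeriv i P x) δ fun x _ i hi => hfP i hi x
  have hPr (i : ℕ) (x : ℝ) :
      iteratedDeriv i (P + r) x = iteratedDeriv i P x + iteratedDeriv i r x :=
    iteratedDeriv_add (contDiffAt_of_mem_trigPoly hP i x) (contDiffAt_of_mem_trigPoly hr i x)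
  refine ⟨P + r, isFiniteFourierSeries_of_mem_trigPoly (add_mem hP hr), fun i hi j => ?_,
    fun i hi x => ?_⟩
  · rw [← ((periodic_of_mem_trigPoly (add_mem hP hr)).iteratedDeriv i).apply_toIcoMod
      Real.two_pi_pos 0, ← (Periodic.iteratedDeriv hper i).apply_toIcoMod Real.two_pi_pos 0, hPr,
      hr_jet _ (Finset.mem_image_of_mem _ (Finset.mem_univ j)) i hi, add_sub_cancel]
  · rw [hPr, ← sub_sub]
    calc ‖iteratedDeriv i f x - iteratedDeriv i P x - iteratedDeriv i r x‖
        ≤ δ + |C| * δ := (norm_sub_le _ _).trans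
          (add_le_add (hfP i hi x) ((hr_le i hi x).trans (by gcongr; exact le_abs_self C)))
      _ = ε / 2 := by simp only [δ]; field_simp; ring
      _ < ε := half_lt_self hε
end

section
/- Let k ∈ ℕ, let f : ℝ → ℂ be a C^k function satisfying f(x+π) = −f(x) for all x ∈ ℝ (in particular f is 2π-periodic), let z₁, …, z_M ∈ ℝ be finitely many points, and let ε > 0. Then there exists a finite Fourier series p with p(x+π) = −p(x) for all x ∈ ℝ, such that p^{(i)}(z_j) = f^{(i)}(z_j) for all 0 ≤ i ≤ k and all j = 1, …, M, and |f − p|_k < ε. -/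
/-!
Trigonometric polynomials with odd frequencies are dense, in the `C^k` sense, among `C^k` functions
with `f (x + π) = -f x`. Stone–Weierstrass on the circle gives `C^0` density of trigonometric
polynomials; integrating a `C^k` approximation of `f'` with its constant term removed upgrades this
to `C^(k+1)`, the constant term being small because `f'` has mean zero; and the odd part
`(g x - g (x + π)) / 2` of an approximant of `f` is again an approximant of `f`.

Interpolation then comes for free. The jets at the points `z j` of odd trigonometric polynomials
form a finite-dimensional, hence closed, space, which therefore contains the jet of `f`. An
approximant `q` is corrected by an odd trigonometric polynomial with jet `jet f - jet q`, taken as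
a combination of a fixed finite family with coefficients depending linearly on this small
difference, so the correction is small in `C^k`.
-/

open Complex Set Submodule Function Real
open scoped ContDiff

section FiniteRankCorrection

variable {𝕜 V ι : Type*} [NontriviallyNormedField 𝕜] [CompleteSpace 𝕜]
  [AddCommGroup V] [Module 𝕜 V]

theorem LinearMap.exists_preimage_forall_norm_le {F : Type*} [NormedAddCommGroup F]
    [NormedSpace 𝕜 F] [FiniteDimensional 𝕜 F] (L : V →ₗ[𝕜] F) (φ : ι → V →ₗ[𝕜] 𝕜)
    (hφ : ∀ v, BddAbove (Set.range fun i => ‖φ i v‖)) :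
    ∃ C, 0 ≤ C ∧ ∀ y ∈ LinearMap.range L, ∃ v, L v = y ∧ ∀ i, ‖φ i v‖ ≤ C * ‖y‖ := by
  let b := Module.finBasis 𝕜 (LinearMap.range L)
  choose s hs using fun j => (b j).2
  choose B hB using fun j => hφ (s j)
  let E := b.equivFunL.toContinuousLinearMap
  refine ⟨‖E‖ * ∑ j, |B j|, by positivity, fun y hy => ?_⟩
  set a := E ⟨y, hy⟩
  refine ⟨∑ j, a j • s j, ?_, fun i => ?_⟩
  · simp only [map_sum, map_smul, hs]
    calc ∑ j, a j • (b j : F) = ((∑ j, b.equivFun ⟨y, hy⟩ j • b j : LinearMap.range L) : F) := by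
          push_cast; rfl
      _ = y := by rw [b.sum_equivFun]
  · have ha : ‖a‖ ≤ ‖E‖ * ‖y‖ := E.le_opNorm ⟨y, hy⟩
    calc ‖φ i (∑ j, a j • s j)‖ ≤ ∑ j, ‖a‖ * |B j| := by
          simp only [map_sum, map_smul, smul_eq_mul]
          refine (norm_sum_le _ _).trans (Finset.sum_le_sum fun j _ => ?_)
          rw [norm_mul]
          exact mul_le_mul (norm_le_pi_norm a j) ((hB j ⟨i, rfl⟩).trans (le_abs_self _))
            (norm_nonneg _) (norm_nonneg _)
      _ = ‖a‖ * ∑ j, |B j| := by rw [Finset.mul_sum]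
      _ ≤ (‖E‖ * ‖y‖) * ∑ j, |B j| := by gcongr
      _ = (‖E‖ * ∑ j, |B j|) * ‖y‖ := by ring

theorem exists_approx_and_interpolate {κ : Type*} [Fintype κ] (φ : ι → V →ₗ[𝕜] 𝕜)
    (hφ : ∀ v, BddAbove (Set.range fun i => ‖φ i v‖)) (t : ι → 𝕜)
    (ht : ∀ δ > 0, ∃ v, ∀ i, ‖t i - φ i v‖ < δ) (e : κ → ι) {ε : ℝ} (hε : 0 < ε) :
    ∃ v, (∀ j, φ (e j) v = t (e j)) ∧ ∀ i, ‖t i - φ i v‖ < ε := by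
  let L : V →ₗ[𝕜] κ → 𝕜 := LinearMap.pi fun j => φ (e j)
  obtain ⟨C, hC, hLC⟩ := L.exists_preimage_forall_norm_le φ hφ
  -- `t ∘ e` is a limit of points of the finite-dimensional, hence closed, range of `L`.
  have hte : t ∘ e ∈ LinearMap.range L := by
    rw [← SetLike.mem_coe, ← (LinearMap.range L).closed_of_finiteDimensional.closure_eq]
    refine Metric.mem_closure_iff.2 fun δ hδ => ?_
    obtain ⟨v, hv⟩ := ht δ hδ
    exact ⟨L v, ⟨v, rfl⟩, (dist_pi_lt_iff hδ).2 fun j => by simpa [L, dist_eq_norm] using hv (e j)⟩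
  set δ := ε / (1 + C)
  obtain ⟨v, hv⟩ := ht δ (by positivity)
  obtain ⟨w, hLw, hw⟩ := hLC (t ∘ e - L v) (sub_mem hte ⟨v, rfl⟩)
  have hy : ‖t ∘ e - L v‖ ≤ δ := (pi_norm_le_iff_of_nonneg (by positivity)).2 fun j => (hv (e j)).le
  refine ⟨v + w, fun j => ?_, fun i => ?_⟩
  · have hj := congrFun hLw j
    simp only [L, LinearMap.pi_apply, Pi.sub_apply, Function.comp_apply] at hj
    rw [map_add, hj, add_sub_cancel]
  · calc ‖t i - φ i (v + w)‖ = ‖(t i - φ i v) - φ i w‖ := by rw [map_add, sub_sub]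
      _ ≤ ‖t i - φ i v‖ + ‖φ i w‖ := norm_sub_le _ _
      _ < δ + C * δ := add_lt_add_of_lt_of_le (hv i) ((hw i).trans (by gcongr))
      _ = ε := by rw [← one_add_mul, mul_comm, div_mul_cancel₀ _ (by positivity)]

end FiniteRankCorrection

section Calculus

variable {E : Type*} [NormedAddCommGroup E] [NormedSpace ℝ E] {g g' h : ℝ → E} {T B : ℝ}

theorem Function.Periodic.deriv (hg : Periodic g T) : Periodic (deriv g) T := fun x => by
  rw [← deriv_comp_add_const]
  exact congrArg (_root_.deriv · x) (funext hg)

theorem Function.Antiperiodic.iteratedDeriv (hg : Antiperiodic g T) (i : ℕ) :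
    Antiperiodic (iteratedDeriv i g) T := fun x =>
  calc _root_.iteratedDeriv i g (x + T) = _root_.iteratedDeriv i (fun z => g (z + T)) x := by
        rw [iteratedDeriv_comp_add_const]
    _ = _root_.iteratedDeriv i (fun z => -g z) x :=
        congrArg (_root_.iteratedDeriv i · x) (funext hg)
    _ = -_root_.iteratedDeriv i g x := iteratedDeriv_fun_neg i g x

theorem Function.Periodic.norm_le_mul_of_hasDerivAt (hg : Periodic g T) (hT : 0 < T)
    (hg0 : g 0 = 0) (hd : ∀ x, HasDerivAt g (g' x) x) (hB : ∀ x, ‖g' x‖ ≤ B) (x : ℝ) :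
    ‖g x‖ ≤ B * T := by
  obtain ⟨y, hy, hxy⟩ := hg.exists_mem_Ico₀ hT x
  have hy' := norm_image_sub_le_of_norm_deriv_le_segment' (fun t _ => (hd t).hasDerivWithinAt)
    (fun t _ => hB t) y (Ico_subset_Icc_self hy)
  rw [hg0, sub_zero, sub_zero] at hy'
  rw [hxy]
  exact hy'.trans (mul_le_mul_of_nonneg_left hy.2.le ((norm_nonneg _).trans (hB 0)))

/-- The derivative of a periodic function has mean zero, so a constant part of it is controlled
by the rest. -/
theorem Function.Periodic.norm_le_of_hasDerivAt_add_const [CompleteSpace E] {c : E}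
    (hg : Periodic g T) (hT : 0 < T) (hd : ∀ x, HasDerivAt g (h x + c) x) (hh : Continuous h)
    (hB : ∀ x, ‖h x‖ ≤ B) : ‖c‖ ≤ B := by
  have hint : ∫ x in (0)..T, (h x + c) = 0 := by
    rw [intervalIntegral.integral_eq_sub_of_hasDerivAt (fun x _ => hd x)
      ((hh.add continuous_const).intervalIntegrable _ _), ← zero_add T, hg 0, sub_self]
  rw [intervalIntegral.integral_add (hh.intervalIntegrable _ _) intervalIntegrable_const,
    intervalIntegral.integral_const, sub_zero] at hint
  have hTc : T * ‖c‖ ≤ T * B :=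
    calc T * ‖c‖ = ‖T • c‖ := by rw [norm_smul, Real.norm_of_nonneg hT.le]
      _ = ‖∫ x in (0)..T, h x‖ := by rw [eq_neg_of_add_eq_zero_right hint, norm_neg]
      _ ≤ B * |T - 0| := intervalIntegral.norm_integral_le_of_norm_le_const fun x _ => hB x
      _ = T * B := by rw [sub_zero, abs_of_pos hT, mul_comm]
  exact le_of_mul_le_mul_left hTc hT

end Calculus

section CkClose

variable {E : Type*} [NormedAddCommGroup E] [NormedSpace ℝ E]

def CkClose (k : ℕ) (δ : ℝ) (f g : ℝ → E) : Prop :=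
  ∀ i ≤ k, ∀ x, ‖iteratedDeriv i f x - iteratedDeriv i g x‖ < δ

variable {k : ℕ} {δ δ' : ℝ} {f g : ℝ → E}

theorem CkClose.mono (h : CkClose k δ f g) (hδ : δ ≤ δ') : CkClose k δ' f g :=
  fun i hi x => (h i hi x).trans_le hδ

theorem CkClose.norm_sub_lt (h : CkClose k δ f g) (x : ℝ) : ‖f x - g x‖ < δ := by
  simpa using h 0 (Nat.zero_le k) x

theorem ckClose_zero_iff : CkClose 0 δ f g ↔ ∀ x, ‖f x - g x‖ < δ := by
  simp [CkClose]

theorem ckClose_succ_iff :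
    CkClose (k + 1) δ f g ↔ (∀ x, ‖f x - g x‖ < δ) ∧ CkClose k δ (deriv f) (deriv g) := by
  constructor
  · intro h
    exact ⟨fun x => by simpa using h 0 (Nat.zero_le _) x,
      fun i hi x => by simpa only [iteratedDeriv_succ'] using h (i + 1) (by omega) x⟩
  · rintro ⟨h0, h⟩ (_ | i) hi x
    · simpa using h0 x
    · simpa only [iteratedDeriv_succ'] using h i (by omega) x

theorem CkClose.sub_const (h : CkClose k δ f g) {c : E} (hc : ‖c‖ ≤ δ') :
    CkClose k (δ + δ') f (fun x => g x - c) := by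
  rintro (_ | i) hi x
  · rw [iteratedDeriv_zero, iteratedDeriv_zero, sub_sub_eq_add_sub, add_sub_right_comm]
    exact (norm_add_le _ _).trans_lt (add_lt_add_of_lt_of_le (h.norm_sub_lt x) hc)
  · have hderiv : deriv (fun x => g x - c) = deriv g := funext fun x => deriv_sub_const c
    rw [iteratedDeriv_succ' (f := fun x => g x - c), hderiv, ← iteratedDeriv_succ']
    exact (h (i + 1) hi x).trans_le (le_add_of_nonneg_right ((norm_nonneg c).trans hc))

end CkClose

noncomputable def fourierMode (m : ℤ) (t : ℝ) : ℂ := exp (m * t * I)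

def fourierSpan : Submodule ℂ (ℝ → ℂ) := span ℂ (range fourierMode)

def oddFourierSpan : Submodule ℂ (ℝ → ℂ) := span ℂ (fourierMode '' {m | Odd m})

section FourierMode

variable (m : ℤ)

theorem hasDerivAt_fourierMode (x : ℝ) :
    HasDerivAt (fourierMode m) (m * I * fourierMode m x) x := by
  have h : HasDerivAt (fun t : ℝ => (m : ℂ) * t * I) (m * I) x := by
    simpa using ((hasDerivAt_id x).ofReal_comp.const_mul (m : ℂ)).mul_const I
  exact h.cexp.congr_deriv (by rw [fourierMode]; ring)

theorem deriv_fourierMode : deriv (fourierMode m) = (m * I : ℂ) • fourierMode m :=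
  funext fun x => (hasDerivAt_fourierMode m x).deriv

theorem contDiff_fourierMode : ContDiff ℝ ∞ (fourierMode m) :=
  ((contDiff_const.mul ofRealCLM.contDiff).mul contDiff_const).cexp

theorem norm_fourierMode (x : ℝ) : ‖fourierMode m x‖ = 1 := by
  rw [fourierMode, show (m : ℂ) * x * I = ((m * x : ℝ) : ℂ) * I by push_cast; ring]
  exact norm_exp_ofReal_mul_I _

theorem fourierMode_zero : fourierMode 0 = 1 := by
  ext x; simp [fourierMode]

theorem fourierMode_add_pi (x : ℝ) : fourierMode m (x + π) = (-1) ^ m * fourierMode m x := by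
  rw [fourierMode, fourierMode, ← exp_pi_mul_I, ← exp_int_mul, ← Complex.exp_add]
  congr 1; push_cast; ring

theorem periodic_fourierMode : Periodic (fourierMode m) (2 * π) := fun x => by
  rw [two_mul, ← add_assoc, fourierMode_add_pi, fourierMode_add_pi, ← mul_assoc, ← mul_zpow,
    neg_one_mul, neg_neg, one_zpow, one_mul]

end FourierMode

theorem const_mem_fourierSpan (a : ℂ) : (fun _ => a) ∈ fourierSpan := by
  convert smul_mem fourierSpan a (subset_span (mem_range_self 0)) using 1
  ext; simp [fourierMode_zero]

theorem contDiff_of_mem_fourierSpan {g : ℝ → ℂ} (hg : g ∈ fourierSpan) : ContDiff ℝ ∞ g := by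
  induction hg using span_induction with
  | mem _ h => obtain ⟨m, rfl⟩ := h; exact contDiff_fourierMode m
  | zero => exact contDiff_const
  | add _ _ _ _ h₁ h₂ => exact h₁.add h₂
  | smul a _ _ h => exact h.const_smul a

theorem differentiable_of_mem_fourierSpan {g : ℝ → ℂ} (hg : g ∈ fourierSpan) :
    Differentiable ℝ g :=
  (contDiff_of_mem_fourierSpan hg).differentiable (by simp)

theorem periodic_of_mem_fourierSpan {g : ℝ → ℂ} (hg : g ∈ fourierSpan) : Periodic g (2 * π) := by
  induction hg using span_induction with
  | mem _ h => obtain ⟨m, rfl⟩ := h; exact periodic_fourierMode m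
  | zero => exact fun _ => rfl
  | add _ _ _ _ h₁ h₂ => exact h₁.add h₂
  | smul a _ _ h => exact h.smul a

theorem exists_bound_of_mem_fourierSpan {g : ℝ → ℂ} (hg : g ∈ fourierSpan) :
    ∃ B, ∀ x, ‖g x‖ ≤ B := by
  induction hg using span_induction with
  | mem _ h => obtain ⟨m, rfl⟩ := h; exact ⟨1, fun x => (norm_fourierMode m x).le⟩
  | zero => exact ⟨0, fun x => by simp⟩
  | add _ _ _ _ h₁ h₂ =>
    obtain ⟨B₁, h₁⟩ := h₁
    obtain ⟨B₂, h₂⟩ := h₂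
    exact ⟨B₁ + B₂, fun x => (norm_add_le _ _).trans (add_le_add (h₁ x) (h₂ x))⟩
  | smul a _ _ h =>
    obtain ⟨B, h⟩ := h
    exact ⟨‖a‖ * B, fun x => by rw [Pi.smul_apply, norm_smul]; gcongr; exact h x⟩

theorem deriv_mem_fourierSpan {g : ℝ → ℂ} (hg : g ∈ fourierSpan) : deriv g ∈ fourierSpan := by
  induction hg using span_induction with
  | mem _ h =>
    obtain ⟨m, rfl⟩ := h
    rw [deriv_fourierMode]
    exact smul_mem _ _ (subset_span (mem_range_self m))
  | zero => simp
  | add g₁ g₂ hg₁ hg₂ h₁ h₂ =>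
    have hd : deriv (g₁ + g₂) = deriv g₁ + deriv g₂ := funext fun x =>
      deriv_add (differentiable_of_mem_fourierSpan hg₁ x) (differentiable_of_mem_fourierSpan hg₂ x)
    exact hd ▸ add_mem h₁ h₂
  | smul a g _ h =>
    have hd : deriv (a • g) = a • deriv g := funext fun x => deriv_const_smul_field a g
    exact hd ▸ smul_mem _ a h

theorem iteratedDeriv_mem_fourierSpan {g : ℝ → ℂ} (hg : g ∈ fourierSpan) (i : ℕ) :
    iteratedDeriv i g ∈ fourierSpan := by
  induction i with
  | zero => simpa using hg
  | succ i ih => rw [iteratedDeriv_succ]; exact deriv_mem_fourierSpan ih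

theorem exists_bound_iteratedDeriv_of_mem_fourierSpan {g : ℝ → ℂ} (hg : g ∈ fourierSpan)
    (k : ℕ) : ∃ B, ∀ i ≤ k, ∀ x, ‖iteratedDeriv i g x‖ ≤ B := by
  choose B hB using fun i => exists_bound_of_mem_fourierSpan (iteratedDeriv_mem_fourierSpan hg i)
  obtain ⟨U, hU⟩ := ((Finset.range (k + 1)).finite_toSet.image B).bddAbove
  exact ⟨U, fun i hi x => (hB i x).trans (hU (mem_image_of_mem B (by simp; omega)))⟩

theorem exists_hasDerivAt_sub_const_of_mem_fourierSpan {q : ℝ → ℂ} (hq : q ∈ fourierSpan) :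
    ∃ c : ℂ, ∃ Q ∈ fourierSpan, ∀ x, HasDerivAt Q (q x - c) x := by
  induction hq using span_induction with
  | mem _ h =>
    obtain ⟨m, rfl⟩ := h
    rcases eq_or_ne m 0 with rfl | hm
    · exact ⟨1, 0, zero_mem _, fun x => by simp [fourierMode_zero]⟩
    · have hmI : (m * I : ℂ) ≠ 0 := mul_ne_zero (by exact_mod_cast hm) I_ne_zero
      refine ⟨0, (m * I : ℂ)⁻¹ • fourierMode m, smul_mem _ _ (subset_span (mem_range_self m)),
        fun x => ?_⟩
      refine ((hasDerivAt_fourierMode m x).const_smul (m * I : ℂ)⁻¹).congr_deriv ?_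
      rw [sub_zero, smul_eq_mul, ← mul_assoc, inv_mul_cancel₀ hmI, one_mul]
  | zero => exact ⟨0, 0, zero_mem _, fun x => by simp⟩
  | add _ _ _ _ h₁ h₂ =>
    obtain ⟨c₁, Q₁, hQ₁, h₁⟩ := h₁
    obtain ⟨c₂, Q₂, hQ₂, h₂⟩ := h₂
    refine ⟨c₁ + c₂, Q₁ + Q₂, add_mem hQ₁ hQ₂, fun x => ?_⟩
    exact ((h₁ x).add (h₂ x)).congr_deriv (by rw [Pi.add_apply]; ring)
  | smul a _ _ h =>
    obtain ⟨c, Q, hQ, h⟩ := h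
    refine ⟨a * c, a • Q, smul_mem _ a hQ, fun x => ?_⟩
    exact ((h x).const_smul a).congr_deriv (by rw [Pi.smul_apply, smul_eq_mul, smul_eq_mul]; ring)

theorem isFiniteFourierSeries_of_mem_fourierSpan {p : ℝ → ℂ} (hp : p ∈ fourierSpan) :
    IsFiniteFourierSeries p := by
  obtain ⟨c, rfl⟩ := Finsupp.mem_span_range_iff_exists_finsupp.1 hp
  refine ⟨c.support.sup Int.natAbs, c, fun t => ?_⟩
  rw [Finsupp.sum, Finset.sum_apply]
  refine Finset.sum_subset (fun m hm => ?_) (fun m _ hm => ?_)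
  · have : m.natAbs ≤ c.support.sup Int.natAbs := Finset.le_sup hm
    simp only [Finset.mem_Icc]; omega
  · simp [Finsupp.notMem_support_iff.1 hm]

theorem oddFourierSpan_le_fourierSpan : oddFourierSpan ≤ fourierSpan :=
  span_mono (image_subset_range _ _)

theorem antiperiodic_of_mem_oddFourierSpan {g : ℝ → ℂ} (hg : g ∈ oddFourierSpan) :
    Antiperiodic g π := by
  induction hg using span_induction with
  | mem _ h =>
    obtain ⟨m, hm, rfl⟩ := h
    exact fun x => by rw [fourierMode_add_pi, hm.neg_one_zpow, neg_one_mul]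
  | zero => exact fun _ => neg_zero.symm
  | add _ _ _ _ h₁ h₂ => exact fun x => by simp only [Pi.add_apply, h₁ x, h₂ x, neg_add]
  | smul a _ _ h => exact h.smul a

theorem exists_mem_fourierSpan_norm_sub_lt {f : ℝ → ℂ} (hf : Continuous f)
    (hper : Periodic f (2 * π)) {δ : ℝ} (hδ : 0 < δ) :
    ∃ q ∈ fourierSpan, ∀ x, ‖f x - q x‖ < δ := by
  have : Fact (0 < 2 * π) := ⟨two_pi_pos⟩
  let F : C(AddCircle (2 * π), ℂ) := ⟨hper.lift, hf.quotient_liftOn' _⟩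
  have hF : F ∈ (span ℂ (range (fourier (T := 2 * π)))).topologicalClosure := by
    rw [span_fourier_closure_eq_top]; trivial
  obtain ⟨G, hG, hFG⟩ := Metric.mem_closure_iff.1 hF δ hδ
  let restrict : C(AddCircle (2 * π), ℂ) →ₗ[ℂ] ℝ → ℂ :=
    (LinearMap.funLeft ℂ ℂ ((↑) : ℝ → AddCircle (2 * π))).comp (ContinuousMap.coeFnLinearMap ℂ)
  have hrestrict : (span ℂ (range (fourier (T := 2 * π)))).map restrict = fourierSpan := by
    rw [Submodule.map_span, ← range_comp]
    congr 2
    ext n x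
    change fourier n (x : AddCircle (2 * π)) = fourierMode n x
    rw [fourier_coe_apply, fourierMode]
    congr 1
    push_cast
    field_simp
  refine ⟨restrict G, hrestrict ▸ mem_map_of_mem hG, fun x => ?_⟩
  calc ‖f x - restrict G x‖ = ‖(F - G) x‖ := rfl
    _ ≤ ‖F - G‖ := (F - G).norm_coe_le_norm x
    _ < δ := by rwa [← dist_eq_norm]

theorem exists_mem_fourierSpan_ckClose {k : ℕ} {f : ℝ → ℂ} (hf : ContDiff ℝ k f)
    (hper : Periodic f (2 * π)) {δ : ℝ} (hδ : 0 < δ) : ∃ q ∈ fourierSpan, CkClose k δ f q := by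
  induction k generalizing f δ with
  | zero =>
    obtain ⟨q, hq, hfq⟩ := exists_mem_fourierSpan_norm_sub_lt hf.continuous hper hδ
    exact ⟨q, hq, ckClose_zero_iff.2 hfq⟩
  | succ k ih =>
    have hf' : ContDiff ℝ k (deriv f) := hf.deriv'
    -- `δ / 16` absorbs the factor `2 * (2 * π)` of the mean value bound below.
    obtain ⟨q, hq, hfq⟩ := ih hf' hper.deriv (div_pos hδ (by norm_num : (0 : ℝ) < 16))
    obtain ⟨c, Q, hQ, hQd⟩ := exists_hasDerivAt_sub_const_of_mem_fourierSpan hq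
    set P : ℝ → ℂ := fun x => Q x + (f 0 - Q 0)
    have hP : P ∈ fourierSpan := add_mem hQ (const_mem_fourierSpan _)
    have hPd : ∀ x, HasDerivAt P (q x - c) x := fun x => (hQd x).add_const _
    have hgd : ∀ x, HasDerivAt (fun x => f x - P x) ((deriv f x - q x) + c) x := fun x =>
      ((hf.differentiable (by simp) x).hasDerivAt.sub (hPd x)).congr_deriv (by ring)
    have hgper : Periodic (fun x => f x - P x) (2 * π) :=
      hper.sub (periodic_of_mem_fourierSpan hP)
    have hc : ‖c‖ ≤ δ / 16 := hgper.norm_le_of_hasDerivAt_add_const two_pi_pos hgd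
      (hf'.continuous.sub (contDiff_of_mem_fourierSpan hq).continuous)
      fun x => (hfq.norm_sub_lt x).le
    refine ⟨P, hP, ckClose_succ_iff.2 ⟨fun x => ?_, ?_⟩⟩
    · calc ‖f x - P x‖ ≤ (δ / 16 + δ / 16) * (2 * π) :=
            hgper.norm_le_mul_of_hasDerivAt two_pi_pos (by simp [P]) hgd
              (fun x => (norm_add_le _ _).trans (add_le_add (hfq.norm_sub_lt x).le hc)) x
        _ < δ := by nlinarith [pi_lt_four]
    · rw [show deriv P = fun x => q x - c from funext fun x => (hPd x).deriv]
      exact (hfq.sub_const hc).mono (by linarith)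

noncomputable def antiperiodicPart : (ℝ → ℂ) →ₗ[ℂ] ℝ → ℂ where
  toFun g x := 2⁻¹ * (g x - g (x + π))
  map_add' g h := by ext x; simp only [Pi.add_apply]; ring
  map_smul' a g := by ext x; simp only [Pi.smul_apply, smul_eq_mul, RingHom.id_apply]; ring

theorem antiperiodicPart_fourierMode (m : ℤ) :
    antiperiodicPart (fourierMode m) = if Odd m then fourierMode m else 0 := by
  ext x
  change (2⁻¹ : ℂ) * (_ - _) = _
  rw [fourierMode_add_pi]
  split_ifs with hm
  · rw [hm.neg_one_zpow]; ring
  · rw [(Int.not_odd_iff_even.1 hm).neg_one_zpow]; simp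

theorem antiperiodicPart_mem_oddFourierSpan {g : ℝ → ℂ} (hg : g ∈ fourierSpan) :
    antiperiodicPart g ∈ oddFourierSpan := by
  have : fourierSpan ≤ oddFourierSpan.comap antiperiodicPart := span_le.2 <| by
    rintro _ ⟨m, rfl⟩
    rw [SetLike.mem_coe, mem_comap, antiperiodicPart_fourierMode]
    split_ifs with hm
    · exact subset_span (mem_image_of_mem _ hm)
    · exact zero_mem _
  exact this hg

theorem iteratedDeriv_antiperiodicPart {g : ℝ → ℂ} {i : ℕ} (hg : ContDiff ℝ i g) :
    iteratedDeriv i (antiperiodicPart g) = antiperiodicPart (iteratedDeriv i g) := by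
  ext x
  change iteratedDeriv i (fun x => 2⁻¹ * (g x - g (x + π))) x =
    2⁻¹ * (iteratedDeriv i g x - iteratedDeriv i g (x + π))
  have hg' : ContDiff ℝ i (fun y => g (y + π)) := hg.comp (contDiff_id.add contDiff_const)
  rw [iteratedDeriv_const_mul_field, iteratedDeriv_fun_sub hg.contDiffAt hg'.contDiffAt,
    iteratedDeriv_comp_add_const]

theorem ckClose_antiperiodicPart {k : ℕ} {δ : ℝ} {f g : ℝ → ℂ} (hf : Antiperiodic f π)
    (hg : ContDiff ℝ k g) (h : CkClose k δ f g) : CkClose k δ f (antiperiodicPart g) :=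
  fun i hi x => by
  rw [iteratedDeriv_antiperiodicPart (hg.of_le (by exact_mod_cast hi))]
  calc ‖iteratedDeriv i f x - antiperiodicPart (iteratedDeriv i g) x‖
      = ‖2⁻¹ * ((iteratedDeriv i f x - iteratedDeriv i g x) -
          (iteratedDeriv i f (x + π) - iteratedDeriv i g (x + π)))‖ := by
        rw [hf.iteratedDeriv i x]
        congr 1
        change _ - (2⁻¹ : ℂ) * (_ - _) = _
        ring
    _ ≤ 2⁻¹ * (‖iteratedDeriv i f x - iteratedDeriv i g x‖ +
          ‖iteratedDeriv i f (x + π) - iteratedDeriv i g (x + π)‖) := by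
        rw [norm_mul, norm_inv, Complex.norm_ofNat]
        gcongr
        exact norm_sub_le _ _
    _ < 2⁻¹ * (δ + δ) := by gcongr <;> exact h i hi _
    _ = δ := by ring

theorem exists_mem_oddFourierSpan_ckClose {k : ℕ} {f : ℝ → ℂ} (hf : ContDiff ℝ k f)
    (hodd : Antiperiodic f π) {δ : ℝ} (hδ : 0 < δ) : ∃ q ∈ oddFourierSpan, CkClose k δ f q := by
  obtain ⟨q, hq, hfq⟩ := exists_mem_fourierSpan_ckClose hf hodd.periodic_two_mul hδ
  exact ⟨antiperiodicPart q, antiperiodicPart_mem_oddFourierSpan hq, ckClose_antiperiodicPart hodd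
    ((contDiff_of_mem_fourierSpan hq).of_le (by exact_mod_cast le_top)) hfq⟩

noncomputable def evalIteratedDeriv {S : Submodule ℂ (ℝ → ℂ)} (hS : ∀ g ∈ S, ContDiff ℝ ∞ g)
    (i : ℕ) (x : ℝ) : S →ₗ[ℂ] ℂ where
  toFun g := iteratedDeriv i g x
  map_add' g h := iteratedDeriv_add ((hS g g.2).of_le (by exact_mod_cast le_top)).contDiffAt
    ((hS h h.2).of_le (by exact_mod_cast le_top)).contDiffAt
  map_smul' a g := iteratedDeriv_const_smul_field a _

/-- Odd simultaneous interpolation and approximation by finite Fourier series: for a `C^k`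
function `f : ℝ → ℂ` satisfying `f (x + π) = -f x` for all `x`, finitely many points
`z 1, …, z M` and `ε > 0`, there is a finite Fourier series `p`, also satisfying
`p (x + π) = -p x` for all `x`, whose derivatives up to order `k` agree with those of `f` at
each `z j`, and which is `ε`-close to `f` in the `C^k`-norm. -/
theorem odd_fourier_interpolation_and_approximation
    (k : ℕ) (f : ℝ → ℂ) (hf : ContDiff ℝ k f)
    (hodd : ∀ x : ℝ, f (x + Real.pi) = -f x)
    (M : ℕ) (z : Fin M → ℝ) (ε : ℝ) (hε : 0 < ε) :
    ∃ p : ℝ → ℂ, IsFiniteFourierSeries p ∧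
      (∀ x : ℝ, p (x + Real.pi) = -p x) ∧
      (∀ i ≤ k, ∀ j : Fin M, iteratedDeriv i p (z j) = iteratedDeriv i f (z j)) ∧
      (∀ i ≤ k, ∀ x : ℝ, ‖iteratedDeriv i f x - iteratedDeriv i p x‖ < ε) := by
  have hsmooth : ∀ g ∈ oddFourierSpan, ContDiff ℝ ∞ g := fun g hg =>
    contDiff_of_mem_fourierSpan (oddFourierSpan_le_fourierSpan hg)
  have hbdd (g : oddFourierSpan) :
      BddAbove (range fun ix : Fin (k + 1) × ℝ => ‖iteratedDeriv ix.1 (g : ℝ → ℂ) ix.2‖) := by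
    obtain ⟨B, hB⟩ := exists_bound_iteratedDeriv_of_mem_fourierSpan
      (oddFourierSpan_le_fourierSpan g.2) k
    exact ⟨B, by rintro _ ⟨⟨i, x⟩, rfl⟩; exact hB i i.is_le x⟩
  have happrox (δ : ℝ) (hδ : 0 < δ) : ∃ g : oddFourierSpan, ∀ ix : Fin (k + 1) × ℝ,
      ‖iteratedDeriv ix.1 f ix.2 - iteratedDeriv ix.1 (g : ℝ → ℂ) ix.2‖ < δ := by
    obtain ⟨q, hq, hfq⟩ := exists_mem_oddFourierSpan_ckClose hf hodd hδ
    exact ⟨⟨q, hq⟩, fun ix => hfq ix.1 ix.1.is_le ix.2⟩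
  obtain ⟨⟨p, hp⟩, hinterp, hclose⟩ := exists_approx_and_interpolate
    (fun ix => evalIteratedDeriv hsmooth ix.1 ix.2) hbdd (fun ix => iteratedDeriv ix.1 f ix.2)
    happrox (fun ji : Fin M × Fin (k + 1) => (ji.2, z ji.1)) hε
  exact ⟨p, isFiniteFourierSeries_of_mem_fourierSpan (oddFourierSpan_le_fourierSpan hp),
    antiperiodic_of_mem_oddFourierSpan hp, fun i hi j => hinterp (j, ⟨i, by omega⟩),
    fun i hi x => hclose (⟨i, by omega⟩, x)⟩
end

section
/- Let n and k be odd positive integers and let N ≤ k be a natural number. For each j ∈ {0, 1, …, n−1}, let c_{j,m} ∈ ℂ (for −N ≤ m ≤ N) be coefficients such that c_{j,m} = 0 whenever m + j is even, and set a_j(t) = Σ_{m=−N}^{N} c_{j,m} e^{imt}. Then there exists a polynomial P ∈ ℂ[U, V, W], of degree n in the variable U, such that for all u ∈ ℂ, all r ≥ 0 and all t ∈ ℝ: P(u, r e^{it}, r e^{−it}) = uⁿ + Σ_{j=0}^{n−1} r^{k(n−j)} a_j(t) u^j. -/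
open MvPolynomial Finset

private lemma degOf_mono_le {σ R : Type*} [CommSemiring R] [DecidableEq σ]
    (i : σ) (s : σ →₀ ℕ) (a : R) : MvPolynomial.degreeOf i (MvPolynomial.monomial s a) ≤ s i := by
  by_cases ha : a = 0
  · simp [ha]
  · rw [MvPolynomial.degreeOf_monomial_eq s i ha]


/-- Polynomiality of the radially weighted homogeneous construction
`f(u, r e^{it}) = u^n + ∑_{j=0}^{n-1} r^{k(n-j)} a_j(t) u^j` for an odd loop: if `n` and `k` are
odd positive integers, `N ≤ k`, and each coefficient function
`a_j(t) = ∑_{m=-N}^{N} c_{j,m} e^{imt}` satisfies `c_{j,m} = 0` whenever `m + j` is even, then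
there is a polynomial `P ∈ ℂ[U,V,W]`, of degree `n` in `U`, with
`P(u, r e^{it}, r e^{-it}) = u^n + ∑_{j=0}^{n-1} r^{k(n-j)} a_j(t) u^j` for all `u ∈ ℂ`,
`r ≥ 0`, `t ∈ ℝ`. -/
theorem semiholomorphic_polynomiality
    (n k : ℕ) (hn : Odd n) (hn0 : 0 < n) (hk : Odd k) (hk0 : 0 < k)
    (N : ℕ) (hN : N ≤ k)
    (c : Fin n → ℤ → ℂ)
    (hc : ∀ (j : Fin n) (m : ℤ), Even (m + (j : ℕ)) → c j m = 0) :
    ∃ P : MvPolynomial (Fin 3) ℂ,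
      MvPolynomial.degreeOf 0 P = n ∧
      ∀ (u : ℂ) (r : ℝ), 0 ≤ r → ∀ t : ℝ,
        MvPolynomial.eval
            ![u, (r : ℂ) * Complex.exp (t * Complex.I),
              (r : ℂ) * Complex.exp (-(t * Complex.I))] P
          = u ^ n + ∑ j : Fin n,
              (r : ℂ) ^ (k * (n - (j : ℕ))) *
                (∑ m ∈ Finset.Icc (-(N : ℤ)) (N : ℤ), c j m * Complex.exp (m * t * Complex.I)) *
                u ^ (j : ℕ) := by
  classical
  -- exponents
  set K : Fin n → ℕ := fun j => k * (n - (j : ℕ)) with hK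
  set a : Fin n → ℤ → ℕ := fun j m => ((((K j : ℤ) + m)) / 2).toNat with ha
  set b : Fin n → ℤ → ℕ := fun j m => ((((K j : ℤ) - m)) / 2).toNat with hb
  set s : Fin n → ℤ → (Fin 3 →₀ ℕ) := fun j m =>
    Finsupp.single 0 (j : ℕ) + Finsupp.single 1 (a j m) + Finsupp.single 2 (b j m) with hs
  refine ⟨X 0 ^ n + ∑ j : Fin n, ∑ m ∈ Finset.Icc (-(N : ℤ)) (N : ℤ),
      monomial (s j m) (c j m), ?_, ?_⟩
  · -- degree
    have hKk : ∀ j : Fin n, k ≤ K j := by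
      intro j
      have hj : 1 ≤ n - (j : ℕ) := by have := j.2; omega
      calc k = k * 1 := (mul_one k).symm
        _ ≤ K j := Nat.mul_le_mul_left k hj
    apply le_antisymm
    · refine le_trans (degreeOf_add_le _ _ _) ?_
      simp only [sup_le_iff]
      constructor
      · rw [X_pow_eq_monomial]
        refine le_trans (degOf_mono_le _ _ _) ?_
        simp
      · refine le_trans (degreeOf_sum_le _ _ _) ?_
        refine Finset.sup_le fun j _ => ?_
        refine le_trans (degreeOf_sum_le _ _ _) ?_
        refine Finset.sup_le fun m _ => ?_
        refine le_trans (degOf_mono_le _ _ _) ?_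
        simp [hs, Finsupp.single_apply]
    · have hcoeff : coeff (Finsupp.single 0 n)
          (X 0 ^ n + ∑ j : Fin n, ∑ m ∈ Finset.Icc (-(N : ℤ)) (N : ℤ),
            monomial (s j m) (c j m) : MvPolynomial (Fin 3) ℂ) = 1 := by
        rw [coeff_add, X_pow_eq_monomial, coeff_monomial, if_pos rfl]
        rw [coeff_sum]
        have : ∀ j ∈ (univ : Finset (Fin n)),
            coeff (Finsupp.single 0 n) (∑ m ∈ Finset.Icc (-(N : ℤ)) (N : ℤ),
              monomial (s j m) (c j m)) = 0 := by
          intro j _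
          rw [coeff_sum]
          refine Finset.sum_eq_zero fun m _ => ?_
          rw [coeff_monomial, if_neg]
          intro h
          have := DFunLike.congr_fun h 0
          simp [hs, Finsupp.single_apply] at this
          exact absurd this (Nat.ne_of_lt j.2)
        rw [Finset.sum_eq_zero this, add_zero]
      have hmem : Finsupp.single 0 n ∈
          (X 0 ^ n + ∑ j : Fin n, ∑ m ∈ Finset.Icc (-(N : ℤ)) (N : ℤ),
            monomial (s j m) (c j m) : MvPolynomial (Fin 3) ℂ).support := by
        rw [mem_support_iff, hcoeff]; exact one_ne_zero
      have := monomial_le_degreeOf 0 hmem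
      simpa using this
  · intro u r hr t
    simp only [map_add, map_pow, eval_X, map_sum, Matrix.cons_val_zero]
    congr 1
    refine Finset.sum_congr rfl fun j _ => ?_
    rw [Finset.mul_sum, Finset.sum_mul]
    refine Finset.sum_congr rfl fun m hm => ?_
    by_cases h0 : c j m = 0
    · simp [h0]
    -- parity and bounds
    have hodd : ¬ Even (m + (j : ℕ)) := fun h => h0 (hc j m h)
    have hKj : (N : ℤ) ≤ K j := by
      have hj : 1 ≤ n - (j : ℕ) := by have := j.2; omega
      have h2 : k ≤ K j := by
        calc k = k * 1 := (mul_one k).symm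
          _ ≤ K j := Nat.mul_le_mul_left k hj
      exact_mod_cast le_trans hN h2
    have hmN : -(N : ℤ) ≤ m ∧ m ≤ N := by
      rw [Finset.mem_Icc] at hm; exact hm
    have hpos1 : 0 ≤ (K j : ℤ) + m := by omega
    have hpos2 : 0 ≤ (K j : ℤ) - m := by omega
    have hkodd : ¬ Even ((k : ℤ)) := by
      rw [Int.not_even_iff_odd]; exact_mod_cast hk
    have hnodd : ¬ Even ((n : ℤ)) := by
      rw [Int.not_even_iff_odd]; exact_mod_cast hn
    have hKcast : (K j : ℤ) = (k : ℤ) * ((n : ℤ) - ((j : ℕ) : ℤ)) := by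
      simp only [hK]
      push_cast [Nat.cast_sub j.2.le]
      ring
    have heven : Even ((K j : ℤ) + m) := by
      rw [Int.even_add, hKcast, Int.even_mul, Int.even_sub]
      rw [Int.even_add] at hodd
      tauto
    have hab1 : (a j m : ℤ) = ((K j : ℤ) + m) / 2 := by
      simp only [ha]
      rw [Int.toNat_of_nonneg (by omega)]
    have hab2 : (b j m : ℤ) = ((K j : ℤ) - m) / 2 := by
      simp only [hb]
      rw [Int.toNat_of_nonneg (by omega)]
    rcases heven with ⟨q, hq⟩
    have hsum : a j m + b j m = K j := by
      have : (a j m : ℤ) + b j m = K j := by rw [hab1, hab2]; omega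
      exact_mod_cast this
    have hdiff : (a j m : ℤ) - b j m = m := by rw [hab1, hab2]; omega
    -- eval of the monomial
    have heval : MvPolynomial.eval
        ![u, (r : ℂ) * Complex.exp (t * Complex.I),
          (r : ℂ) * Complex.exp (-(t * Complex.I))] (monomial (s j m) (c j m))
        = c j m * u ^ (j : ℕ) *
          ((r : ℂ) * Complex.exp (t * Complex.I)) ^ (a j m) *
          ((r : ℂ) * Complex.exp (-(t * Complex.I))) ^ (b j m) := by
      rw [eval_monomial, hs]
      simp only []
      rw [Finsupp.prod_add_index (by simp) (by intros; rw [pow_add]),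
          Finsupp.prod_add_index (by simp) (by intros; rw [pow_add])]
      rw [Finsupp.prod_single_index (by simp), Finsupp.prod_single_index (by simp),
          Finsupp.prod_single_index (by simp)]
      simp [mul_assoc]
    rw [heval]
    rw [mul_pow, mul_pow]
    rw [← Complex.exp_nat_mul, ← Complex.exp_nat_mul]
    have hexp : Complex.exp ((a j m : ℂ) * (t * Complex.I)) *
        Complex.exp ((b j m : ℂ) * -(t * Complex.I)) = Complex.exp (m * t * Complex.I) := by
      rw [← Complex.exp_add]
      congr 1
      have hcast : ((a j m : ℂ) - b j m) = (m : ℂ) := by exact_mod_cast hdiff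
      linear_combination (t * Complex.I) * hcast
    have hrpow : ((r:ℂ)) ^ (a j m) * ((r:ℂ)) ^ (b j m) = (r : ℂ) ^ (K j) := by
      rw [← pow_add, hsum]
    calc c j m * u ^ (j : ℕ) * ((r:ℂ) ^ a j m * Complex.exp ((a j m : ℂ) * (t * Complex.I))) *
          ((r:ℂ) ^ b j m * Complex.exp ((b j m : ℂ) * -(t * Complex.I)))
        = ((r:ℂ) ^ a j m * (r:ℂ) ^ b j m) *
          (Complex.exp ((a j m : ℂ) * (t * Complex.I)) * Complex.exp ((b j m : ℂ) * -(t * Complex.I))) *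
          (c j m * u ^ (j : ℕ)) := by ring
      _ = (r : ℂ) ^ (K j) * Complex.exp (m * t * Complex.I) * (c j m * u ^ (j : ℕ)) := by
          rw [hrpow, hexp]
      _ = (r : ℂ) ^ (k * (n - (j : ℕ))) * (c j m * Complex.exp (m * t * Complex.I)) * u ^ (j:ℕ) := by
          rw [hK]; ring
end

section
/- Let a < b be positive integers. Let w, A : ℝ → ℂ be real-analytic and 2π-periodic, with w not identically zero, and suppose every zero of w is of order exactly 2. Assume that at every zero t₀ of w: A(t₀) ≠ 0, and either A(t₀)·conj(w''(t₀)) is not a negative real number, or Im(A'(t₀)/A(t₀)) ≠ Im(w'''(t₀)/(3·w''(t₀))). Then there exists ε₀ > 0 such that for every ε with 0 < ε < ε₀ and every t ∈ ℝ: ε^a·w(t) + ε^b·A(t) ≠ 0. -/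
/-!
Suppose the claim fails. Then `w t + δ A t = 0` for arbitrarily small `δ = ε ^ (b - a) > 0`, and
by periodicity and compactness these roots `t` accumulate at some `t₀`, which must be a zero of
`w`. There `w t = (t - t₀)² W t` with `W t₀ = w''(t₀) / 2 ≠ 0`, so the analytic function
`g = A / W` takes the nonpositive real values `-(t - t₀)² / δ` at points `t ≠ t₀` accumulating
at `t₀`. Hence `g t₀ = A t₀ / W t₀` is a negative real, which makes `A t₀ · conj (w'' t₀)` a
negative real, and, by the identity theorem applied to `Im g`, `g` is real near `t₀`, so its
logarithmic derivative `A'/A - W'/W` is real at `t₀`. As `W'/W = w'''/(3 w'')` at `t₀`, both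
alternatives of the hypothesis at `t₀` are violated.
-/

open Filter Topology Set Nat Function Complex

section IteratedDslope

variable {𝕜 E : Type*} [NontriviallyNormedField 𝕜] [NormedAddCommGroup E] [NormedSpace 𝕜 E]
  {f : 𝕜 → E} {z₀ : 𝕜}

theorem eq_sub_sq_smul_dslope_dslope (h0 : f z₀ = 0) (h1 : deriv f z₀ = 0) (z : 𝕜) :
    f z = (z - z₀) ^ 2 • dslope (dslope f z₀) z₀ z := by
  rw [sq, mul_smul, sub_smul_dslope, dslope_same, h1, sub_zero, sub_smul_dslope, h0, sub_zero]

theorem HasFPowerSeriesAt.iteratedDeriv_eq_factorial_smul_coeff [CompleteSpace E]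
    {p : FormalMultilinearSeries 𝕜 𝕜 E} (hp : HasFPowerSeriesAt f p z₀) (n : ℕ) :
    iteratedDeriv n f z₀ = n ! • p.coeff n := by
  obtain ⟨r, hr⟩ := hp
  rw [iteratedDeriv_eq_iteratedFDeriv, ← hr.factorial_smul 1 n]
  rfl

theorem AnalyticAt.iterate_dslope (hf : AnalyticAt 𝕜 f z₀) (k : ℕ) :
    AnalyticAt 𝕜 ((swap dslope z₀)^[k] f) z₀ :=
  let ⟨_, hp⟩ := hf
  ⟨_, hp.has_fpower_series_iterate_dslope_fslope k⟩

theorem AnalyticAt.factorial_smul_iteratedDeriv_add [CompleteSpace E] (hf : AnalyticAt 𝕜 f z₀)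
    (n k : ℕ) :
    n ! • iteratedDeriv (n + k) f z₀ = (n + k)! • iteratedDeriv n ((swap dslope z₀)^[k] f) z₀ := by
  obtain ⟨p, hp⟩ := hf
  rw [hp.iteratedDeriv_eq_factorial_smul_coeff,
    (hp.has_fpower_series_iterate_dslope_fslope k).iteratedDeriv_eq_factorial_smul_coeff,
    FormalMultilinearSeries.coeff_iterate_fslope, smul_comm]

theorem AnalyticAt.iteratedDeriv_two_eq_two_smul_dslope_dslope [CompleteSpace E]
    (hf : AnalyticAt 𝕜 f z₀) :
    iteratedDeriv 2 f z₀ = 2 • dslope (dslope f z₀) z₀ z₀ := by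
  simpa using hf.factorial_smul_iteratedDeriv_add 0 2

theorem AnalyticAt.iteratedDeriv_three_eq_six_smul_deriv_dslope_dslope [CompleteSpace E]
    (hf : AnalyticAt 𝕜 f z₀) :
    iteratedDeriv 3 f z₀ = 6 • deriv (dslope (dslope f z₀) z₀) z₀ := by
  simpa [show 3 ! = 6 from rfl] using hf.factorial_smul_iteratedDeriv_add 1 2

end IteratedDslope

section RealValues

variable {g : ℝ → ℂ} {t₀ : ℝ}

theorem AnalyticAt.im_deriv_eq_zero_of_frequently (hg : AnalyticAt ℝ g t₀)
    (h : ∃ᶠ t in 𝓝[≠] t₀, (g t).im = 0) : (deriv g t₀).im = 0 := by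
  have him : AnalyticAt ℝ (fun t => (g t).im) t₀ := (imCLM.analyticAt _).comp hg
  have hzero : (fun t => (g t).im) =ᶠ[𝓝 t₀] fun _ => 0 :=
    him.frequently_zero_iff_eventually_zero.1 h
  exact (imCLM.hasFDerivAt.comp_hasDerivAt t₀ hg.differentiableAt.hasDerivAt).unique
    ((hasDerivAt_const t₀ 0).congr_of_eventuallyEq hzero)

theorem AnalyticAt.exists_neg_and_im_logDeriv_eq_zero (hg : AnalyticAt ℝ g t₀) (hg0 : g t₀ ≠ 0)
    (h : ∃ᶠ t in 𝓝[≠] t₀, g t ∉ slitPlane) :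
    (∃ ρ : ℝ, ρ < 0 ∧ g t₀ = ρ) ∧ (logDeriv g t₀).im = 0 := by
  have notMem_iff (z : ℂ) : z ∉ slitPlane ↔ z.re ≤ 0 ∧ z.im = 0 := by
    simp [mem_slitPlane_iff]
  have hmem : g t₀ ∉ slitPlane :=
    isOpen_slitPlane.isClosed_compl.mem_of_frequently_of_tendsto h
      (hg.continuousAt.tendsto.mono_left nhdsWithin_le_nhds)
  obtain ⟨hre, him⟩ := (notMem_iff _).1 hmem
  have hreal : g t₀ = (g t₀).re := ext rfl (by simp [him])
  have hderiv := hg.im_deriv_eq_zero_of_frequently (h.mono fun t ht => ((notMem_iff _).1 ht).2)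
  refine ⟨⟨(g t₀).re, lt_of_le_of_ne hre fun h0 => hg0 ?_, hreal⟩, ?_⟩
  · rw [hreal, h0, ofReal_zero]
  · rw [logDeriv_apply, hreal, div_ofReal_im, hderiv, zero_div]

end RealValues

theorem div_notMem_slitPlane_of_sq_mul_add_mul_eq_zero {r δ : ℝ} {u v : ℂ} (hδ : 0 < δ)
    (hv : v ≠ 0) (h : (r : ℂ) ^ 2 * v + δ * u = 0) : u / v ∉ slitPlane := by
  have hquot : u / v = ((-r ^ 2 / δ : ℝ) : ℂ) := by
    have hδ' : (δ : ℂ) ≠ 0 := ofReal_ne_zero.2 hδ.ne'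
    rw [div_eq_iff hv]
    push_cast
    field_simp
    linear_combination h
  rw [hquot, ofReal_mem_slitPlane, not_lt]
  exact div_nonpos_of_nonpos_of_nonneg (neg_nonpos.2 (sq_nonneg r)) hδ.le

section DeformedRoots

variable {w A W : ℝ → ℂ} {t₀ : ℝ}

theorem frequently_div_notMem_slitPlane_of_frequently_add_mul_eq_zero
    (hfac : ∀ t, w t = (t - t₀) ^ 2 • W t) (hW : ContinuousAt W t₀) (hW0 : W t₀ ≠ 0)
    (hA0 : A t₀ ≠ 0) (h : ∃ᶠ z in 𝓝 ((0 : ℝ), t₀), 0 < z.1 ∧ w z.2 + (z.1 : ℂ) * A z.2 = 0) :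
    ∃ᶠ t in 𝓝[≠] t₀, A t / W t ∉ slitPlane := by
  rw [frequently_nhdsWithin_iff]
  have hsnd : Tendsto Prod.snd (𝓝 ((0 : ℝ), t₀)) (𝓝 t₀) := continuousAt_snd
  refine hsnd.frequently (p := fun t => A t / W t ∉ slitPlane ∧ t ≠ t₀) ?_
  refine (h.and_eventually ((hW.comp continuousAt_snd).eventually_ne hW0)).mono ?_
  rintro ⟨δ, t⟩ ⟨⟨hδ, hroot⟩, hWt⟩
  change 0 < δ at hδ
  change W t ≠ 0 at hWt
  change w t + (δ : ℂ) * A t = 0 at hroot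
  rw [hfac, real_smul, ofReal_pow, ofReal_sub, ← ofReal_sub] at hroot
  refine ⟨div_notMem_slitPlane_of_sq_mul_add_mul_eq_zero hδ hWt hroot,
    fun (ht : t = t₀) => ?_⟩
  rw [ht, sub_self, ofReal_zero, zero_pow two_ne_zero, zero_mul, zero_add] at hroot
  exact mul_ne_zero (ofReal_ne_zero.2 hδ.ne') hA0 hroot

theorem exists_neg_mul_conj_and_im_div_eq_of_frequently_add_mul_eq_zero (hw : AnalyticAt ℝ w t₀)
    (hA : AnalyticAt ℝ A t₀) (hw0 : w t₀ = 0) (hw1 : deriv w t₀ = 0)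
    (hw2 : iteratedDeriv 2 w t₀ ≠ 0) (hA0 : A t₀ ≠ 0)
    (h : ∃ᶠ z in 𝓝 ((0 : ℝ), t₀), 0 < z.1 ∧ w z.2 + (z.1 : ℂ) * A z.2 = 0) :
    (∃ x : ℝ, x < 0 ∧ A t₀ * (starRingEnd ℂ) (iteratedDeriv 2 w t₀) = x) ∧
      (deriv A t₀ / A t₀).im = (iteratedDeriv 3 w t₀ / (3 * iteratedDeriv 2 w t₀)).im := by
  set W := dslope (dslope w t₀) t₀
  have hW : AnalyticAt ℝ W t₀ := hw.iterate_dslope 2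
  have hw2W : iteratedDeriv 2 w t₀ = 2 * W t₀ := by
    rw [hw.iteratedDeriv_two_eq_two_smul_dslope_dslope, nsmul_eq_mul, Nat.cast_ofNat]
  have hw3W : iteratedDeriv 3 w t₀ = 6 * deriv W t₀ := by
    rw [hw.iteratedDeriv_three_eq_six_smul_deriv_dslope_dslope, nsmul_eq_mul, Nat.cast_ofNat]
  have hW0 : W t₀ ≠ 0 := fun h => hw2 (by rw [hw2W, h, mul_zero])
  have hfreq := frequently_div_notMem_slitPlane_of_frequently_add_mul_eq_zero
    (eq_sub_sq_smul_dslope_dslope hw0 hw1) hW.continuousAt hW0 hA0 h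
  have hg : AnalyticAt ℝ (fun t => A t / W t) t₀ := hA.div hW hW0
  obtain ⟨⟨ρ, hρ, hρg⟩, hlog⟩ := hg.exists_neg_and_im_logDeriv_eq_zero (div_ne_zero hA0 hW0) hfreq
  rw [logDeriv_div t₀ hA0 hW0 hA.differentiableAt hW.differentiableAt, sub_im, logDeriv_apply,
    logDeriv_apply, sub_eq_zero] at hlog
  have hAW : A t₀ = ρ * W t₀ := by rw [← hρg]; field_simp
  constructor
  · refine ⟨2 * ρ * normSq (W t₀), by nlinarith [normSq_pos.2 hW0], ?_⟩
    rw [hw2W, hAW, map_mul, map_ofNat]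
    push_cast
    linear_combination (2 * (ρ : ℂ)) * mul_conj (W t₀)
  · rw [hlog, hw2W, hw3W]
    congr 1
    field_simp
    ring

theorem eventually_nhds_add_mul_ne_zero (hw : AnalyticAt ℝ w t₀) (hA : AnalyticAt ℝ A t₀)
    (horder : w t₀ = 0 → deriv w t₀ = 0 ∧ iteratedDeriv 2 w t₀ ≠ 0)
    (hzero : w t₀ = 0 → A t₀ ≠ 0 ∧
      ((¬ ∃ x : ℝ, x < 0 ∧ A t₀ * (starRingEnd ℂ) (iteratedDeriv 2 w t₀) = (x : ℂ)) ∨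
        (deriv A t₀ / A t₀).im ≠ (iteratedDeriv 3 w t₀ / (3 * iteratedDeriv 2 w t₀)).im)) :
    ∀ᶠ z : ℝ × ℝ in 𝓝 (0, t₀), 0 < z.1 → w z.2 + (z.1 : ℂ) * A z.2 ≠ 0 := by
  by_cases h0 : w t₀ = 0
  · obtain ⟨hA0, hcase⟩ := hzero h0
    by_contra hroots
    simp only [not_eventually, Classical.not_imp, ne_eq, not_not] at hroots
    obtain ⟨hneg, him⟩ := exists_neg_mul_conj_and_im_div_eq_of_frequently_add_mul_eq_zero
      hw hA h0 (horder h0).1 (horder h0).2 hA0 hroots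
    exact hcase.elim (· hneg) (· him)
  · have hwc := hw.continuousAt
    have hAc := hA.continuousAt
    have hcont : ContinuousAt (fun z : ℝ × ℝ => w z.2 + (z.1 : ℂ) * A z.2) (0, t₀) := by
      fun_prop
    exact (hcont.eventually_ne (by simpa using h0)).mono fun z hz _ => hz

theorem eventually_forall_add_mul_ne_zero_of_periodic {c : ℝ} (hc : 0 < c) (hw : Periodic w c)
    (hA : Periodic A c)
    (hlocal : ∀ t₀, ∀ᶠ z : ℝ × ℝ in 𝓝 (0, t₀), 0 < z.1 → w z.2 + (z.1 : ℂ) * A z.2 ≠ 0) :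
    ∀ᶠ δ : ℝ in 𝓝 0, ∀ t, 0 < δ → w t + (δ : ℂ) * A t ≠ 0 := by
  filter_upwards [isCompact_Icc.eventually_forall_of_forall_eventually
    (P := fun (δ : ℝ) t => 0 < δ → w t + (δ : ℂ) * A t ≠ 0) fun t₀ _ => hlocal t₀]
    with δ hδ t hpos
  have hper : Periodic (fun t => w t + (δ : ℂ) * A t) c := fun t => by simp only [hw t, hA t]
  obtain ⟨s, hs, hst⟩ := hper.exists_mem_Ico₀ hc t
  exact hst ▸ hδ s (Ico_subset_Icc_self hs) hpos

end DeformedRoots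

theorem deformation_nonvanishing_general
    (a b : ℕ) (hab : a < b)
    (w A : ℝ → ℂ)
    (hw_an : ∀ t : ℝ, AnalyticAt ℝ w t) (hA_an : ∀ t : ℝ, AnalyticAt ℝ A t)
    (hw_per : ∀ t : ℝ, w (t + 2 * Real.pi) = w t)
    (hA_per : ∀ t : ℝ, A (t + 2 * Real.pi) = A t)
    (horder : ∀ t₀ : ℝ, w t₀ = 0 → deriv w t₀ = 0 ∧ iteratedDeriv 2 w t₀ ≠ 0)
    (hzero : ∀ t₀ : ℝ, w t₀ = 0 →
      A t₀ ≠ 0 ∧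
      ((¬ ∃ x : ℝ, x < 0 ∧ A t₀ * (starRingEnd ℂ) (iteratedDeriv 2 w t₀) = (x : ℂ)) ∨
        (deriv A t₀ / A t₀).im ≠ (iteratedDeriv 3 w t₀ / (3 * iteratedDeriv 2 w t₀)).im)) :
    ∃ ε₀ > (0 : ℝ), ∀ ε : ℝ, 0 < ε → ε < ε₀ → ∀ t : ℝ,
      (ε : ℂ) ^ a * w t + (ε : ℂ) ^ b * A t ≠ 0 := by
  have hsmall := eventually_forall_add_mul_ne_zero_of_periodic Real.two_pi_pos hw_per hA_per
    fun t₀ => eventually_nhds_add_mul_ne_zero (hw_an t₀) (hA_an t₀) (horder t₀) (hzero t₀)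
  have hpow : Tendsto (fun ε : ℝ => ε ^ (b - a)) (𝓝 0) (𝓝 0) := by
    simpa [zero_pow (Nat.sub_ne_zero_of_lt hab)] using (continuous_pow (M := ℝ) (b - a)).tendsto 0
  obtain ⟨ε₀, hε₀, hball⟩ := Metric.eventually_nhds_iff.1 (hpow.eventually hsmall)
  refine ⟨ε₀, hε₀, fun ε hε hεε₀ t => ?_⟩
  have hfactor : (ε : ℂ) ^ a * w t + (ε : ℂ) ^ b * A t
      = (ε : ℂ) ^ a * (w t + ((ε ^ (b - a) : ℝ) : ℂ) * A t) := by
    rw [ofReal_pow, mul_add, ← mul_assoc, ← pow_add, Nat.add_sub_cancel' hab.le]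
  rw [hfactor]
  exact mul_ne_zero (pow_ne_zero _ (ofReal_ne_zero.2 hε.ne'))
    (hball (by simpa [abs_of_pos hε] using hεε₀) t (pow_pos hε _))

/-- Nonvanishing of the deformed critical values: let `a < b` be positive integers and let
`w, A : ℝ → ℂ` be real-analytic and `2π`-periodic, `w` not identically zero, all zeros of `w`
of order exactly `2`. If at every zero `t₀` of `w` we have `A t₀ ≠ 0` and either
`A t₀ * conj (w'' t₀)` is not a negative real number, or the argument-derivative of `A` at
`t₀` differs from the limiting argument-derivative `Im(w'''(t₀)/(3 w''(t₀)))` of `w`, then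
there is `ε₀ > 0` such that `ε^a w(t) + ε^b A(t) ≠ 0` for all `0 < ε < ε₀` and all `t`. -/
theorem deformation_nonvanishing
    (a b : ℕ) (ha : 0 < a) (hab : a < b)
    (w A : ℝ → ℂ)
    (hw_an : ∀ t : ℝ, AnalyticAt ℝ w t) (hA_an : ∀ t : ℝ, AnalyticAt ℝ A t)
    (hw_per : ∀ t : ℝ, w (t + 2 * Real.pi) = w t)
    (hA_per : ∀ t : ℝ, A (t + 2 * Real.pi) = A t)
    (hw0 : w ≠ 0)
    (horder : ∀ t₀ : ℝ, w t₀ = 0 → deriv w t₀ = 0 ∧ iteratedDeriv 2 w t₀ ≠ 0)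
    (hzero : ∀ t₀ : ℝ, w t₀ = 0 →
      A t₀ ≠ 0 ∧
      ((¬ ∃ x : ℝ, x < 0 ∧ A t₀ * (starRingEnd ℂ) (iteratedDeriv 2 w t₀) = (x : ℂ)) ∨
        (deriv A t₀ / A t₀).im ≠ (iteratedDeriv 3 w t₀ / (3 * iteratedDeriv 2 w t₀)).im)) :
    ∃ ε₀ > (0 : ℝ), ∀ ε : ℝ, 0 < ε → ε < ε₀ → ∀ t : ℝ,
      (ε : ℂ) ^ a * w t + (ε : ℂ) ^ b * A t ≠ 0 :=
  deformation_nonvanishing_general a b hab w A hw_an hA_an hw_per hA_per horder hzero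
end
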